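/- Let $d_1, d_2, d_3$ be the generators of a pseudosymmetric numerical semigroup $S(d^3)$, with $\sigma_1 = d_1+d_2+d_3$. Suppose the syzygy degrees are $e_1 = d_1+d_2+F/2$, $e_2 = d_2+d_3+F/2$, $e_3 = d_3+d_1+F/2$, $q_1 = F/2 + \sigma_1$, $q_2 = F + \sigma_1$ for some even positive integer $F$, and they satisfy $e_1^2+e_2^2+e_3^2 = q_1^2+q_2^2 - 2 d_1 d_2 d_3$. Then $F = -\sigma_1 + \sqrt{\sigma_1^2 - 4(d_1 d_2 + d_2 d_3 + d_3 d_1) + 4 d_1 d_2 d_3}$. -/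

import Mathlib

/-! With `F = 2k` and `σ₁ = d₁ + d₂ + d₃`, the sum-of-squares identity collapses to the quadratic
`F² + 2σ₁F + 4(d₁d₂ + d₂d₃ + d₃d₁) - 4d₁d₂d₃ = 0`, i.e. `(F + σ₁)² = σ₁² - 4σ₂ + 4d₁d₂d₃`;
since `F + σ₁ ≥ 0`, `F` is the larger root. -/

theorem add_sum_sq_eq_of_sum_sq_syzygy_degrees {R : Type*} [CommRing R] {d1 d2 d3 k : R}
    (h : (d1 + d2 + k) ^ 2 + (d2 + d3 + k) ^ 2 + (d3 + d1 + k) ^ 2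
      = (k + (d1 + d2 + d3)) ^ 2 + (k + k + (d1 + d2 + d3)) ^ 2 - 2 * d1 * d2 * d3) :
    (k + k + d1 + d2 + d3) ^ 2
      = (d1 + d2 + d3) ^ 2 - 4 * (d1 * d2 + d2 * d3 + d3 * d1) + 4 * d1 * d2 * d3 := by
  linear_combination -2 * h

theorem Real.eq_neg_add_sqrt_of_add_sq_eq {x s D : ℝ} (hxs : 0 ≤ x + s) (h : (x + s) ^ 2 = D) :
    x = -s + √D := by
  rw [← h, Real.sqrt_sq hxs]
  ring

theorem pseudosymmetric_frobenius_formula_general (d1 d2 d3 F : ℕ)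
    (hF : Even F)
    (hsq : ((d1 + d2 + F / 2 : ℕ) : ℤ) ^ 2 + ((d2 + d3 + F / 2 : ℕ) : ℤ) ^ 2
          + ((d3 + d1 + F / 2 : ℕ) : ℤ) ^ 2
        = ((F / 2 + (d1 + d2 + d3) : ℕ) : ℤ) ^ 2
          + ((F + (d1 + d2 + d3) : ℕ) : ℤ) ^ 2 - 2 * d1 * d2 * d3) :
    (F : ℝ) = -((d1 : ℝ) + d2 + d3)
      + Real.sqrt (((d1 : ℝ) + d2 + d3) ^ 2
          - 4 * ((d1 : ℝ) * d2 + (d2 : ℝ) * d3 + (d3 : ℝ) * d1)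
          + 4 * d1 * d2 * d3) := by
  obtain ⟨k, rfl⟩ := hF
  rw [show (k + k) / 2 = k by omega] at hsq
  push_cast at hsq
  have hquad := add_sum_sq_eq_of_sum_sq_syzygy_degrees hsq
  apply Real.eq_neg_add_sqrt_of_add_sq_eq (by positivity)
  push_cast
  rw [← add_assoc, ← add_assoc]
  exact_mod_cast hquad

/-- For a pseudosymmetric 3-generated numerical semigroup, the sum-of-squares
identity of Theorem 1 applied to the syzygy degrees
`e₁ = d₁+d₂+F/2, e₂ = d₂+d₃+F/2, e₃ = d₃+d₁+F/2, q₁ = F/2+σ₁, q₂ = F+σ₁`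
determines the Frobenius number `F` via formula (x1). -/
theorem pseudosymmetric_frobenius_formula (d1 d2 d3 F : ℕ)
    (hF : Even F) (hFpos : 0 < F)
    (hsq : ((d1 + d2 + F / 2 : ℕ) : ℤ) ^ 2 + ((d2 + d3 + F / 2 : ℕ) : ℤ) ^ 2
          + ((d3 + d1 + F / 2 : ℕ) : ℤ) ^ 2
        = ((F / 2 + (d1 + d2 + d3) : ℕ) : ℤ) ^ 2
          + ((F + (d1 + d2 + d3) : ℕ) : ℤ) ^ 2 - 2 * d1 * d2 * d3) :
    (F : ℝ) = -((d1 : ℝ) + d2 + d3)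
      + Real.sqrt (((d1 : ℝ) + d2 + d3) ^ 2
          - 4 * ((d1 : ℝ) * d2 + (d2 : ℝ) * d3 + (d3 : ℝ) * d1)
          + 4 * d1 * d2 * d3) :=
  pseudosymmetric_frobenius_formula_general d1 d2 d3 F hF hsq
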